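/- Let C ⊂ S² be a spherically convex body in which any two points have spherical distance at most π/2, and suppose P1, Q1, P2, Q2 ∈ C satisfy arccos(P1·Q1) = π/2 and arccos(P2·Q2) = π/2. Then the great-circle arcs P1Q1 and P2Q2 intersect: there exists a point lying on both minor arcs. -/
import Mathlib
set_option maxHeartbeats 800000

open scoped RealInnerProductSpace
open Real

/-- Geodesic (spherical) convexity: closed under normalized nonnegative combinations. -/
def geodesicConvex (C : Set (EuclideanSpace ℝ (Fin 3))) : Prop :=
  ∀ P ∈ C, ∀ Q ∈ C, ∀ a b : ℝ, 0 ≤ a → 0 ≤ b → 0 < a + b →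
    a • P + b • Q ≠ 0 → ‖a • P + b • Q‖⁻¹ • (a • P + b • Q) ∈ C

/-- The minor great-circle arc from `A` to `B`:
all normalized vectors `(a•A + b•B)/‖a•A + b•B‖` with `a, b ≥ 0`, `a + b > 0`. -/
def arcSet (A B : EuclideanSpace ℝ (Fin 3)) : Set (EuclideanSpace ℝ (Fin 3)) :=
  {X | ∃ a b : ℝ, 0 ≤ a ∧ 0 ≤ b ∧ 0 < a + b ∧ a • A + b • B ≠ 0 ∧
    X = ‖a • A + b • B‖⁻¹ • (a • A + b • B)}

private lemma inArc (A B v : EuclideanSpace ℝ (Fin 3)) (a b : ℝ) (ha : 0 ≤ a) (hb : 0 ≤ b)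
    (hv : v ≠ 0) (heq : a • A + b • B = v) : ‖v‖⁻¹ • v ∈ arcSet A B := by
  refine ⟨a, b, ha, hb, ?_, by rw [heq]; exact hv, by rw [heq]⟩
  rcases (add_nonneg ha hb).lt_or_eq with h | h
  · exact h
  · exfalso; apply hv
    have ha0 : a = 0 := by linarith
    have hb0 : b = 0 := by linarith
    rw [← heq, ha0, hb0]; simp

private lemma selfInArc (A B : EuclideanSpace ℝ (Fin 3)) (hA : ‖A‖ = 1) : A ∈ arcSet A B := by
  have h0 : A ≠ 0 := by intro h; rw [h] at hA; simp at hA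
  have := inArc A B A 1 0 zero_le_one le_rfl h0 (by simp)
  simpa [hA] using this

private lemma sndInArc (A B : EuclideanSpace ℝ (Fin 3)) (hB : ‖B‖ = 1) : B ∈ arcSet A B := by
  have h0 : B ≠ 0 := by intro h; rw [h] at hB; simp at hB
  have := inArc A B B 0 1 le_rfl zero_le_one h0 (by simp)
  simpa [hB] using this

private lemma liPair (A B : EuclideanSpace ℝ (Fin 3)) (hA : ‖A‖ = 1) (hB : ‖B‖ = 1)
    (h : ⟪A, B⟫ = 0) : LinearIndependent ℝ ![A, B] := by
  rw [LinearIndependent.pair_iff]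
  intro s t hst
  have h1 : ⟪A, s • A + t • B⟫ = s := by
    rw [inner_add_right, real_inner_smul_right, real_inner_smul_right, h,
      real_inner_self_eq_norm_mul_norm, hA]; ring
  have h2 : ⟪B, s • A + t • B⟫ = t := by
    rw [inner_add_right, real_inner_smul_right, real_inner_smul_right,
      real_inner_comm A B, h, real_inner_self_eq_norm_mul_norm, hB]; ring
  rw [hst, inner_zero_right] at h1 h2
  exact ⟨h1.symm, h2.symm⟩

private lemma commonVec (A B A' B' : EuclideanSpace ℝ (Fin 3))
    (li1 : LinearIndependent ℝ ![A, B]) (li2 : LinearIndependent ℝ ![A', B']) :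
    ∃ v : EuclideanSpace ℝ (Fin 3), v ≠ 0 ∧ (∃ s t : ℝ, s • A + t • B = v) ∧
      (∃ s t : ℝ, s • A' + t • B' = v) := by
  have hr1 : Set.range ![A, B] = {A, B} := by
    simp [Matrix.range_cons, Matrix.range_empty, Set.pair_comm]
  have hr2 : Set.range ![A', B'] = {A', B'} := by
    simp [Matrix.range_cons, Matrix.range_empty, Set.pair_comm]
  set U := Submodule.span ℝ {A, B} with hUdef
  set V := Submodule.span ℝ {A', B'} with hVdef
  have hU : Module.finrank ℝ U = 2 := by
    have := finrank_span_eq_card li1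
    rw [hr1] at this; simpa using this
  have hV : Module.finrank ℝ V = 2 := by
    have := finrank_span_eq_card li2
    rw [hr2] at this; simpa using this
  have hsup : Module.finrank ℝ ↥(U ⊔ V) ≤ 3 := by
    have := Submodule.finrank_le (U ⊔ V)
    simpa using this
  have hkey := Submodule.finrank_sup_add_finrank_inf_eq U V
  have hinf : (U ⊓ V) ≠ ⊥ := by
    intro hbot
    rw [hbot] at hkey
    simp [hU, hV] at hkey
    omega
  obtain ⟨v, hv, hv0⟩ := Submodule.exists_mem_ne_zero_of_ne_bot hinf
  exact ⟨v, hv0, Submodule.mem_span_pair.mp hv.1, Submodule.mem_span_pair.mp hv.2⟩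

/-- key rigidity lemma for the doubly-mixed-sign case -/
private lemma key (A A' : EuclideanSpace ℝ (Fin 3)) (hAn : ‖A‖ = 1) (hA'n : ‖A'‖ = 1)
    (α β γ δ c b : ℝ) (hc : 0 ≤ c) (hb : 0 ≤ b)
    (hγ : γ = α * ⟪A, A'⟫ + β * c) (hα : α = γ * ⟪A, A'⟫ + δ * b)
    (hα0 : 0 < α) (hβ0 : β < 0) (hγ0 : 0 < γ) (hδ0 : δ < 0) : A = A' := by
  set a : ℝ := ⟪A, A'⟫ with hadef
  have haub : |a| ≤ 1 := by
    have := abs_real_inner_le_norm A A'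
    rwa [hAn, hA'n, mul_one] at this
  have ha1 : a ≤ 1 := (abs_le.mp haub).2
  have h1 : γ ≤ α * a := by nlinarith
  have h2 : α ≤ γ * a := by nlinarith
  have hge : 1 ≤ a := by nlinarith
  have ha : a = 1 := le_antisymm ha1 hge
  have h0 : ⟪A - A', A - A'⟫ = 0 := by
    rw [real_inner_sub_sub_self, real_inner_self_eq_norm_mul_norm,
      real_inner_self_eq_norm_mul_norm, hAn, hA'n, ← hadef, ha]; ring
  exact sub_eq_zero.mp (inner_self_eq_zero.mp h0)

/-- in a spherically convex body `C ⊂ S²` of diameter at most `π/2`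
(closed, geodesically convex, contained in an open hemisphere, with nonempty interior
relative to the sphere), any two chords `P1Q1`, `P2Q2` realizing spherical distance
`π/2` intersect: some point lies on both minor arcs. -/
theorem stmt7 (C : Set (EuclideanSpace ℝ (Fin 3)))
    (hCs : ∀ R ∈ C, ‖R‖ = 1) (hCcl : IsClosed C) (hCc : geodesicConvex C)
    (hhemi : ∃ E0 : EuclideanSpace ℝ (Fin 3), ‖E0‖ = 1 ∧ ∀ R ∈ C, 0 < ⟪E0, R⟫)
    (hint : ∃ U : Set (EuclideanSpace ℝ (Fin 3)), IsOpen U ∧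
      (U ∩ {x | ‖x‖ = 1}).Nonempty ∧ U ∩ {x | ‖x‖ = 1} ⊆ C)
    (hdiam : ∀ R ∈ C, ∀ S ∈ C, 0 ≤ ⟪R, S⟫)
    (P1 Q1 P2 Q2 : EuclideanSpace ℝ (Fin 3))
    (hP1 : P1 ∈ C) (hQ1 : Q1 ∈ C) (hP2 : P2 ∈ C) (hQ2 : Q2 ∈ C)
    (h1 : Real.arccos ⟪P1, Q1⟫ = π / 2) (h2 : Real.arccos ⟪P2, Q2⟫ = π / 2) :
    ∃ X, X ∈ arcSet P1 Q1 ∧ X ∈ arcSet P2 Q2 := by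
  have hP1n := hCs P1 hP1
  have hQ1n := hCs Q1 hQ1
  have hP2n := hCs P2 hP2
  have hQ2n := hCs Q2 hQ2
  -- orthogonality of the chord endpoints
  have hio : ∀ A B : EuclideanSpace ℝ (Fin 3), ‖A‖ = 1 → ‖B‖ = 1 →
      Real.arccos ⟪A, B⟫ = π / 2 → ⟪A, B⟫ = 0 := by
    intro A B hA hB harc
    have hub : |⟪A, B⟫| ≤ 1 := by
      have := abs_real_inner_le_norm A B
      rwa [hA, hB, mul_one] at this
    have := Real.cos_arccos (abs_le.mp hub).1 (abs_le.mp hub).2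
    rw [harc, Real.cos_pi_div_two] at this
    exact this.symm
  have h12 : ⟪P1, Q1⟫ = 0 := hio P1 Q1 hP1n hQ1n h1
  have h34 : ⟪P2, Q2⟫ = 0 := hio P2 Q2 hP2n hQ2n h2
  have h21 : ⟪Q1, P1⟫ = 0 := by rw [real_inner_comm]; exact h12
  have h43 : ⟪Q2, P2⟫ = 0 := by rw [real_inner_comm]; exact h34
  -- a common nonzero vector of the two planes
  obtain ⟨v, hv0, ⟨α, β, hveq1⟩, ⟨γ, δ, hveq2⟩⟩ :=
    commonVec P1 Q1 P2 Q2 (liPair P1 Q1 hP1n hQ1n h12) (liPair P2 Q2 hP2n hQ2n h34)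
  have e1 : ⟪P1, v⟫ = α := by
    rw [← hveq1, inner_add_right, real_inner_smul_right, real_inner_smul_right,
      real_inner_self_eq_norm_mul_norm, hP1n, h12]; ring
  have e2 : ⟪Q1, v⟫ = β := by
    rw [← hveq1, inner_add_right, real_inner_smul_right, real_inner_smul_right,
      real_inner_self_eq_norm_mul_norm, hQ1n, h21]; ring
  have e3 : ⟪P2, v⟫ = γ := by
    rw [← hveq2, inner_add_right, real_inner_smul_right, real_inner_smul_right,
      real_inner_self_eq_norm_mul_norm, hP2n, h34]; ring
  have e4 : ⟪Q2, v⟫ = δ := by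
    rw [← hveq2, inner_add_right, real_inner_smul_right, real_inner_smul_right,
      real_inner_self_eq_norm_mul_norm, hQ2n, h43]; ring
  have g1 : α = γ * ⟪P1, P2⟫ + δ * ⟪P1, Q2⟫ := by
    rw [← e1, ← hveq2, inner_add_right, real_inner_smul_right, real_inner_smul_right]
  have g2 : β = γ * ⟪Q1, P2⟫ + δ * ⟪Q1, Q2⟫ := by
    rw [← e2, ← hveq2, inner_add_right, real_inner_smul_right, real_inner_smul_right]
  have g3 : γ = α * ⟪P1, P2⟫ + β * ⟪Q1, P2⟫ := by
    rw [← e3, ← hveq1, inner_add_right, real_inner_smul_right, real_inner_smul_right,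
      real_inner_comm P2 P1, real_inner_comm P2 Q1]
  have g4 : δ = α * ⟪P1, Q2⟫ + β * ⟪Q1, Q2⟫ := by
    rw [← e4, ← hveq1, inner_add_right, real_inner_smul_right, real_inner_smul_right,
      real_inner_comm Q2 P1, real_inner_comm Q2 Q1]
  set a : ℝ := ⟪P1, P2⟫ with hadef
  set b : ℝ := ⟪P1, Q2⟫ with hbdef
  set c : ℝ := ⟪Q1, P2⟫ with hcdef
  set d : ℝ := ⟪Q1, Q2⟫ with hddef
  have ha0 : 0 ≤ a := hdiam P1 hP1 P2 hP2
  have hb0 : 0 ≤ b := hdiam P1 hP1 Q2 hQ2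
  have hc0 : 0 ≤ c := hdiam Q1 hQ1 P2 hP2
  have hd0 : 0 ≤ d := hdiam Q1 hQ1 Q2 hQ2
  -- case analysis
  by_cases c1 : 0 ≤ α ∧ 0 ≤ β
  · have hγ0 : 0 ≤ γ := by rw [g3]; exact add_nonneg (mul_nonneg c1.1 ha0) (mul_nonneg c1.2 hc0)
    have hδ0 : 0 ≤ δ := by rw [g4]; exact add_nonneg (mul_nonneg c1.1 hb0) (mul_nonneg c1.2 hd0)
    exact ⟨‖v‖⁻¹ • v, inArc P1 Q1 v α β c1.1 c1.2 hv0 hveq1,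
      inArc P2 Q2 v γ δ hγ0 hδ0 hv0 hveq2⟩
  by_cases c2 : α ≤ 0 ∧ β ≤ 0
  · have hveq1' : (-α) • P1 + (-β) • Q1 = -v := by rw [← hveq1]; module
    have hveq2' : (-γ) • P2 + (-δ) • Q2 = -v := by rw [← hveq2]; module
    have hα0 : 0 ≤ -α := by linarith [c2.1]
    have hβ0 : 0 ≤ -β := by linarith [c2.2]
    have hγ0 : 0 ≤ -γ := by nlinarith [g3, mul_nonneg hα0 ha0, mul_nonneg hβ0 hc0]
    have hδ0 : 0 ≤ -δ := by nlinarith [g4, mul_nonneg hα0 hb0, mul_nonneg hβ0 hd0]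
    have hv0' : -v ≠ 0 := neg_ne_zero.mpr hv0
    exact ⟨‖-v‖⁻¹ • (-v), inArc P1 Q1 (-v) (-α) (-β) hα0 hβ0 hv0' hveq1',
      inArc P2 Q2 (-v) (-γ) (-δ) hγ0 hδ0 hv0' hveq2'⟩
  by_cases c3 : 0 ≤ γ ∧ 0 ≤ δ
  · exfalso; apply c1
    constructor
    · rw [g1]; exact add_nonneg (mul_nonneg c3.1 ha0) (mul_nonneg c3.2 hb0)
    · rw [g2]; exact add_nonneg (mul_nonneg c3.1 hc0) (mul_nonneg c3.2 hd0)
  by_cases c4 : γ ≤ 0 ∧ δ ≤ 0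
  · exfalso; apply c2
    constructor
    · nlinarith [g1, mul_nonneg (neg_nonneg.mpr c4.1) ha0, mul_nonneg (neg_nonneg.mpr c4.2) hb0]
    · nlinarith [g2, mul_nonneg (neg_nonneg.mpr c4.1) hc0, mul_nonneg (neg_nonneg.mpr c4.2) hd0]
  -- both pairs strictly mixed
  push_neg at c1 c2 c3 c4
  have hαβ : (0 < α ∧ β < 0) ∨ (α < 0 ∧ 0 < β) := by
    rcases le_or_gt 0 α with h | h
    · have hβ := c1 h
      have hne : α ≠ 0 := by
        intro he
        have := c2 (le_of_eq he)
        linarith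
      exact Or.inl ⟨h.lt_of_ne (Ne.symm hne), hβ⟩
    · exact Or.inr ⟨h, c2 h.le⟩
  have hγδ : (0 < γ ∧ δ < 0) ∨ (γ < 0 ∧ 0 < δ) := by
    rcases le_or_gt 0 γ with h | h
    · have hδ := c3 h
      have hne : γ ≠ 0 := by
        intro he
        have := c4 (le_of_eq he)
        linarith
      exact Or.inl ⟨h.lt_of_ne (Ne.symm hne), hδ⟩
    · exact Or.inr ⟨h, c4 h.le⟩
  rcases hαβ with ⟨hα1, hβ1⟩ | ⟨hα1, hβ1⟩ <;> rcases hγδ with ⟨hγ1, hδ1⟩ | ⟨hγ1, hδ1⟩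
  · -- P1 = P2
    have heq : P1 = P2 := key P1 P2 hP1n hP2n α β γ δ c b hc0 hb0
      (by exact g3) (by exact g1) hα1 hβ1 hγ1 hδ1
    exact ⟨P1, selfInArc P1 Q1 hP1n, heq ▸ selfInArc P2 Q2 hP2n⟩
  · -- P1 = Q2
    have heq : P1 = Q2 := key P1 Q2 hP1n hQ2n α β δ γ d a hd0 ha0
      (by exact by linarith [g4]) (by exact by linarith [g1]) hα1 hβ1 hδ1 hγ1
    exact ⟨P1, selfInArc P1 Q1 hP1n, heq ▸ sndInArc P2 Q2 hQ2n⟩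
  · -- Q1 = P2
    have heq : Q1 = P2 := key Q1 P2 hQ1n hP2n β α γ δ a d ha0 hd0
      (by exact by linarith [g3]) (by exact by linarith [g2]) hβ1 hα1 hγ1 hδ1
    exact ⟨Q1, sndInArc P1 Q1 hQ1n, heq ▸ selfInArc P2 Q2 hP2n⟩
  · -- Q1 = Q2
    have heq : Q1 = Q2 := key Q1 Q2 hQ1n hQ2n β α δ γ b c hb0 hc0
      (by exact by linarith [g4]) (by exact by linarith [g2]) hβ1 hα1 hδ1 hγ1
    exact ⟨Q1, sndInArc P1 Q1 hQ1n, heq ▸ sndInArc P2 Q2 hQ2n⟩
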